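/- Let g ≥ 2 be an integer, m a natural number, and let f ∈ ℂ(z₁,z₂) be a finite sum f = Σₙ fₙ with fₙ ∈ V₂^{(g,m,n)} for each n. If f has no pole along Δ₂ = 0, i.e. f·Δ₁^{2g−2} lies in the polynomial ring ℂ[z₁,z₂], then f itself lies in ℂ[z₁,z₂] and its degree in z₁ is at most m − 6(g−1); in particular f = 0 whenever m < 6(g−1). -/

import Mathlib

open MvPolynomial

noncomputable section

/-- `K = ℂ(z₁,z₂)`, the field of rational functions in two variables over `ℂ`. -/
abbrev K2 : Type := FractionRing (MvPolynomial (Fin 2) ℂ)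

/-- The rational function `z₁`. -/
def z1 : K2 := algebraMap (MvPolynomial (Fin 2) ℂ) K2 (X 0)

/-- The rational function `z₂`. -/
def z2 : K2 := algebraMap (MvPolynomial (Fin 2) ℂ) K2 (X 1)

/-- The conifold discriminant `Δ₁ = (1−432z₁)³ − 27·(432z₁)³·z₂`. -/
def Δ1 : K2 := (1 - 432 * z1) ^ 3 - 27 * (432 * z1) ^ 3 * z2

/-- The conifold discriminant `Δ₂ = 1 + 27z₂`. -/
def Δ2 : K2 := 1 + 27 * z2

/-- `V₀^{(g,m,n)}`: the ℂ-span of `z₁^k (1/432−z₁)^{m−k} z₂^n (Δ₁Δ₂)^{−(2g−2)}` for `0 ≤ k ≤ m`. -/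
def V0 (g : ℤ) (m n : ℕ) : Submodule ℂ K2 :=
  Submodule.span ℂ
    {f : K2 | ∃ k : ℕ, k ≤ m ∧
      f = z1 ^ k * (1 / 432 - z1) ^ (m - k) * z2 ^ n * (Δ1 * Δ2) ^ (-(2 * g - 2))}

/-- `V₁^{(g,m,n)} = {f ∈ V₀^{(g,m,n)} : ι(f) ∈ V₀^{(g,m,n)}}`. -/
def V1 (ι : K2 →ₐ[ℂ] K2) (g : ℤ) (m n : ℕ) : Submodule ℂ K2 :=
  V0 g m n ⊓ (V0 g m n).comap ι.toLinearMap

/-- `V₂^{(g,m,n)} = {f ∈ V₁^{(g,m,n)} : ι(f) = (−1)^{g−1} f}`. -/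
def V2 (ι : K2 →ₐ[ℂ] K2) (g : ℤ) (m n : ℕ) : Submodule ℂ K2 :=
  V1 ι g m n ⊓
    LinearMap.ker (ι.toLinearMap - ((-1 : ℂ) ^ (g - 1)) • (LinearMap.id : K2 →ₗ[ℂ] K2))

/-!
Put `w = 2g − 2`. Clearing the denominator `(Δ₁Δ₂)^w` of `V₀` gives `f·(Δ₁Δ₂)^w = q` with
`deg_{z₁} q ≤ m`. The involution sends `Δ₁` to `(432z₁)³Δ₂`, so applying `ι` to `f·Δ₁^w = p` and
using `ι f = ±f` yields, once the powers of `1 − 432z₁` introduced by `ι z₂` are cleared, a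
polynomial identity `±p·(432z₁)^{3w}Δ₂^w(1 − 432z₁)^{3d} = T·Δ₁^w`. Now `Δ₁` is irreducible (it is
linear in `z₂` with coprime coefficients in `ℂ[z₁]`) and does not divide the cofactor of `p`: it
vanishes at `(1/864, 1/27)`, where the cofactor does not. Hence `Δ₁^w ∣ p`, so `f = U` is a
polynomial, `q = U·(Δ₁Δ₂)^w`, and `deg_{z₁} Δ₁ = 3` gives `deg_{z₁} U + 3w ≤ m`.
-/

local notation "R₂" => MvPolynomial (Fin 2) ℂ

namespace MvPolynomial

theorem last_notMem_vars_rename_castSucc {R : Type*} [CommSemiring R] {n : ℕ}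
    (p : MvPolynomial (Fin n) R) : Fin.last n ∉ (rename Fin.castSucc p).vars := by
  classical
  intro h
  obtain ⟨i, -, hi⟩ := Finset.mem_image.1 (vars_rename _ _ h)
  exact Fin.castSucc_ne_last i hi

theorem not_dvd_of_eval_eq_zero {σ R : Type*} [CommSemiring R] {p q : MvPolynomial σ R}
    (v : σ → R) (hp : eval v p = 0) (hq : eval v q ≠ 0) : ¬p ∣ q := by
  rintro ⟨r, rfl⟩
  exact hq (by rw [map_mul, hp, zero_mul])

theorem exists_mul_pow_eq_of_forall_X {σ R A L : Type*} [CommSemiring R] [CommSemiring A]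
    [Algebra R A] [CommSemiring L] [Algebra R L]
    (ψ : MvPolynomial σ R →ₐ[R] L) (φ : A →ₐ[R] L) (s : A)
    (hX : ∀ i, ∃ a, ψ (X i) * φ s = φ a) (p : MvPolynomial σ R) :
    ∃ (a : A) (n : ℕ), ψ p * φ s ^ n = φ a := by
  induction p using MvPolynomial.induction_on with
  | C r => exact ⟨algebraMap R A r, 0, by simp⟩
  | add p q hp hq =>
    obtain ⟨a, n, ha⟩ := hp
    obtain ⟨b, k, hb⟩ := hq
    refine ⟨a * s ^ k + b * s ^ n, n + k, ?_⟩
    rw [map_add, map_add, map_mul, map_mul, map_pow, map_pow, ← ha, ← hb]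
    ring
  | mul_X p i hp =>
    obtain ⟨a, n, ha⟩ := hp
    obtain ⟨b, hb⟩ := hX i
    refine ⟨a * b, n + 1, ?_⟩
    rw [map_mul, map_mul, ← ha, ← hb]
    ring

variable {σ R L : Type*} [CommSemiring R] [CommSemiring L] [Algebra (MvPolynomial σ R) L]
  [Algebra R L] [IsScalarTower R (MvPolynomial σ R) L]

def degreeOfLEDiv (i : σ) (m : ℕ) (D : L) : Submodule R L where
  carrier := {f | ∃ q : MvPolynomial σ R, degreeOf i q ≤ m ∧ f * D = algebraMap _ L q}
  add_mem' := by
    rintro f f' ⟨q, hq, hf⟩ ⟨q', hq', hf'⟩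
    exact ⟨q + q', (degreeOf_add_le i q q').trans (max_le hq hq'),
      by rw [add_mul, hf, hf', map_add]⟩
  zero_mem' := ⟨0, by simp, by simp⟩
  smul_mem' := by
    rintro c f ⟨q, hq, hf⟩
    refine ⟨c • q, ?_, ?_⟩
    · rw [smul_eq_C_mul]
      exact (degreeOf_C_mul_le q i c).trans hq
    · rw [smul_mul_assoc, hf]
      exact (map_smul (IsScalarTower.toAlgHom R _ L) c q).symm

end MvPolynomial

def Δ1Poly : R₂ := (1 - 432 * X 0) ^ 3 - 27 * (432 * X 0) ^ 3 * X 1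

def Δ2Poly : R₂ := 1 + 27 * X 1

theorem algebraMap_X_zero : algebraMap R₂ K2 (X 0) = z1 := rfl

theorem algebraMap_X_one : algebraMap R₂ K2 (X 1) = z2 := rfl

theorem algebraMap_C (c : ℂ) : algebraMap R₂ K2 (C c) = algebraMap ℂ K2 c :=
  (IsScalarTower.algebraMap_apply ℂ R₂ K2 c).symm

theorem algebraMap_Δ1Poly : algebraMap R₂ K2 Δ1Poly = Δ1 := by
  simp [Δ1Poly, Δ1, z1, z2, map_ofNat]

theorem algebraMap_Δ2Poly : algebraMap R₂ K2 Δ2Poly = Δ2 := by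
  simp [Δ2Poly, Δ2, z2, map_ofNat]

theorem algebraMap_R₂_injective : Function.Injective (algebraMap R₂ K2) :=
  IsFractionRing.injective _ _

theorem Δ1Poly_eq_rename : Δ1Poly =
    rename Fin.castSucc (C (-(27 * 432 ^ 3)) * X 0 ^ 3) * X 1 +
      rename Fin.castSucc ((1 - 432 * X 0) ^ 3) := by
  simp only [Δ1Poly, map_ofNat, map_neg, map_mul, map_pow, map_sub, map_one,
    rename_X, Fin.castSucc_zero]
  ring

theorem irreducible_Δ1Poly : Irreducible Δ1Poly := by
  have hcop : IsCoprime (C (-(27 * 432 ^ 3)) * X 0 ^ 3 : MvPolynomial (Fin 1) ℂ)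
      ((1 - 432 * X 0) ^ 3) := by
    rw [isCoprime_mul_unit_left_left ((Ne.isUnit (by norm_num)).map C)]
    exact IsCoprime.pow ⟨432, 1, by ring⟩
  rw [Δ1Poly_eq_rename]
  refine irreducible_mul_X_add _ _ (Fin.last 1) ?_ (last_notMem_vars_rename_castSucc _)
    (last_notMem_vars_rename_castSucc _) (hcop.map _).isRelPrime
  simp

theorem Δ2Poly_ne_zero : Δ2Poly ≠ 0 := fun h => by
  simpa [Δ2Poly] using congrArg (eval 0) h

theorem Δ1_ne_zero : Δ1 ≠ 0 := by
  rw [← algebraMap_Δ1Poly]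
  exact (map_ne_zero_iff _ algebraMap_R₂_injective).2 irreducible_Δ1Poly.ne_zero

theorem Δ2_ne_zero : Δ2 ≠ 0 := by
  rw [← algebraMap_Δ2Poly]
  exact (map_ne_zero_iff _ algebraMap_R₂_injective).2 Δ2Poly_ne_zero

theorem one_sub_432_mul_z1_ne_zero : (1 - 432 * z1 : K2) ≠ 0 := by
  have : algebraMap R₂ K2 (1 - 432 * X 0) = 1 - 432 * z1 := by simp [z1, map_ofNat]
  rw [← this]
  refine (map_ne_zero_iff _ algebraMap_R₂_injective).2 fun h => ?_
  simpa using congrArg (eval 0) h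

theorem degreeOf_Δ1Poly : degreeOf 0 Δ1Poly = 3 := by
  have hX1 : finSuccEquiv ℂ 1 (X 1) = Polynomial.C (X 0) := finSuccEquiv_X_succ (j := 0)
  rw [← natDegree_finSuccEquiv]
  simp only [Δ1Poly, map_sub, map_pow, map_one, map_mul, map_ofNat, finSuccEquiv_X_zero, hX1]
  compute_degree!
  intro h
  simpa [map_ofNat] using congrArg (eval 0) h

theorem degreeOf_V0_generator_le (c : ℂ) {k m : ℕ} (hk : k ≤ m) (n : ℕ) :
    degreeOf 0 (X 0 ^ k * (C c - X 0) ^ (m - k) * X 1 ^ n : R₂) ≤ m := by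
  have hlin : degreeOf 0 (C c - X 0 : R₂) ≤ 1 := by
    simpa using degreeOf_sub_le 0 (C c) (X 0 : R₂)
  calc _ ≤ degreeOf 0 (X 0 ^ k : R₂) + degreeOf 0 ((C c - X 0) ^ (m - k)) +
        degreeOf 0 (X 1 ^ n : R₂) :=
        (degreeOf_mul_le _ _ _).trans (add_le_add_left (degreeOf_mul_le _ _ _) _)
    _ ≤ k + (m - k) * 1 + 0 := by
        gcongr
        · simp
        · exact (degreeOf_pow_le _ _ _).trans (by gcongr)
        · simp [degreeOf_X_pow_of_ne]
    _ = m := by omega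

theorem V0_le_degreeOfLEDiv (g : ℤ) (m n : ℕ) :
    V0 g m n ≤ degreeOfLEDiv (0 : Fin 2) m ((Δ1 * Δ2) ^ (2 * g - 2)) := by
  refine Submodule.span_le.2 ?_
  rintro _ ⟨k, hk, rfl⟩
  refine ⟨(X 0 ^ k * (C (1 / 432) - X 0) ^ (m - k) * X 1 ^ n : R₂),
    degreeOf_V0_generator_le _ hk n, ?_⟩
  rw [mul_assoc _ ((Δ1 * Δ2) ^ _), ← zpow_add₀ (mul_ne_zero Δ1_ne_zero Δ2_ne_zero)]
  simp [algebraMap_X_zero, algebraMap_X_one, algebraMap_C, map_ofNat]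

theorem apply_Δ1 (ι : K2 →ₐ[ℂ] K2) (h1 : ι z1 = 1 / 432 - z1)
    (h2 : ι z2 = -((432 * z1) ^ 3 * z2) / (1 - 432 * z1) ^ 3) :
    ι Δ1 = (432 * z1) ^ 3 * Δ2 := by
  simp only [Δ1, Δ2, map_sub, map_mul, map_pow, map_one, map_ofNat, h1, h2]
  field_simp [one_sub_432_mul_z1_ne_zero]
  ring

theorem exists_eq_algebraMap_of_mul_Δ1_pow (ι : K2 →ₐ[ℂ] K2) (h1 : ι z1 = 1 / 432 - z1)
    (h2 : ι z2 = -((432 * z1) ^ 3 * z2) / (1 - 432 * z1) ^ 3) {ε : ℂ} (hε : ε ≠ 0) {f : K2}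
    (hf : ι f = ε • f) {w : ℕ} {p : R₂} (hp : f * Δ1 ^ w = algebraMap R₂ K2 p) :
    ∃ U : R₂, f = algebraMap R₂ K2 U := by
  let φ := IsScalarTower.toAlgHom ℂ R₂ K2
  have hφs : φ ((1 - 432 * X 0) ^ 3) = (1 - 432 * z1) ^ 3 := by simp [φ, z1, map_ofNat]
  have hX : ∀ i, ∃ a, ι.comp φ (X i) * φ ((1 - 432 * X 0) ^ 3) = φ a := by
    refine Fin.forall_fin_two.2 ⟨⟨(C (1 / 432) - X 0) * (1 - 432 * X 0) ^ 3, ?_⟩,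
      ⟨-((432 * X 0) ^ 3 * X 1), ?_⟩⟩
    · simp [φ, algebraMap_X_zero, h1, algebraMap_C, map_ofNat]
    · simp only [φ, AlgHom.comp_apply, IsScalarTower.coe_toAlgHom', algebraMap_X_zero,
        algebraMap_X_one, h2, map_pow, map_sub, map_one, map_mul, map_ofNat, map_neg]
      exact div_mul_cancel₀ _ (pow_ne_zero 3 one_sub_432_mul_z1_ne_zero)
  obtain ⟨T, d, hT⟩ := exists_mul_pow_eq_of_forall_X (ι.comp φ) φ _ hX p
  have hT' : ι (algebraMap R₂ K2 p) * ((1 - 432 * z1) ^ 3) ^ d = algebraMap R₂ K2 T := by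
    rw [← hφs]
    exact hT
  set c : R₂ := C ε * ((432 * X 0) ^ 3 * Δ2Poly) ^ w * ((1 - 432 * X 0) ^ 3) ^ d
  have hdvd : Δ1Poly ^ w ∣ p * c := by
    refine ⟨T, algebraMap_R₂_injective ?_⟩
    calc algebraMap R₂ K2 (p * c)
        = f * Δ1 ^ w * (algebraMap ℂ K2 ε * ((432 * z1) ^ 3 * Δ2) ^ w *
            ((1 - 432 * z1) ^ 3) ^ d) := by
          simp [c, ← hp, algebraMap_C, algebraMap_X_zero, algebraMap_Δ2Poly, map_ofNat]
      _ = Δ1 ^ w * (ι (f * Δ1 ^ w) * ((1 - 432 * z1) ^ 3) ^ d) := by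
          rw [map_mul, map_pow, apply_Δ1 ι h1 h2, hf, Algebra.smul_def]
          ring
      _ = algebraMap R₂ K2 (Δ1Poly ^ w * T) := by
          rw [hp, hT', map_mul, map_pow, algebraMap_Δ1Poly]
  have hc : ¬Δ1Poly ∣ c :=
    not_dvd_of_eval_eq_zero ![1 / 864, 1 / 27] (by norm_num [Δ1Poly]) (by norm_num [c, Δ2Poly, hε])
  obtain ⟨U, rfl⟩ :=
    ((irreducible_Δ1Poly.isRelPrime_iff_not_dvd.2 hc).pow_left).dvd_of_dvd_mul_right hdvd
  refine ⟨U, mul_right_cancel₀ (pow_ne_zero w Δ1_ne_zero) ?_⟩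
  rw [hp, map_mul, map_pow, algebraMap_Δ1Poly, mul_comm]

theorem le_degreeOf_mul_Δ1Poly_mul_Δ2Poly_pow {U : R₂} (hU : U ≠ 0) (w : ℕ) :
    degreeOf 0 U + 3 * w ≤ degreeOf 0 (U * (Δ1Poly * Δ2Poly) ^ w) := by
  have hΔ : Δ1Poly * Δ2Poly ≠ 0 := mul_ne_zero irreducible_Δ1Poly.ne_zero Δ2Poly_ne_zero
  rw [degreeOf_mul_eq hU (pow_ne_zero w hΔ), degreeOf_pow_eq _ _ _ hΔ,
    degreeOf_mul_eq irreducible_Δ1Poly.ne_zero Δ2Poly_ne_zero, degreeOf_Δ1Poly]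
  nlinarith

/-- If `f = Σₙ fₙ` with `fₙ ∈ V₂^{(g,m,n)}` has no pole along `Δ₂ = 0`
(i.e. `f·Δ₁^{2g−2}` is a polynomial), then `f` itself is a polynomial of `z₁`-degree at most
`m − 6(g−1)`; in particular `f = 0` whenever `m < 6(g−1)`. -/
theorem no_pole_implies_polynomial (ι : K2 →ₐ[ℂ] K2)
    (h1 : ι z1 = 1 / 432 - z1)
    (h2 : ι z2 = -((432 * z1) ^ 3 * z2) / (1 - 432 * z1) ^ 3)
    (g : ℤ) (hg : 2 ≤ g) (m : ℕ)
    (f : K2) (F : ℕ → K2) (N : ℕ)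
    (hF : ∀ n : ℕ, F n ∈ V2 ι g m n)
    (hsum : f = ∑ n ∈ Finset.range N, F n)
    (hpole : ∃ p : MvPolynomial (Fin 2) ℂ,
      f * Δ1 ^ (2 * g - 2) = algebraMap (MvPolynomial (Fin 2) ℂ) K2 p) :
    (∃ p : MvPolynomial (Fin 2) ℂ,
       f = algebraMap (MvPolynomial (Fin 2) ℂ) K2 p ∧
       (p ≠ 0 → (p.degreeOf 0 : ℤ) ≤ (m : ℤ) - 6 * (g - 1))) ∧
    ((m : ℤ) < 6 * (g - 1) → f = 0) := by
  obtain ⟨w, hw⟩ : ∃ w : ℕ, 2 * g - 2 = w := ⟨(2 * g - 2).toNat, by omega⟩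
  have hf_eigen : f ∈ LinearMap.ker (ι.toLinearMap - ((-1 : ℂ) ^ (g - 1)) • LinearMap.id) :=
    hsum ▸ Submodule.sum_mem _ fun n _ => (hF n).2
  obtain ⟨q, hq_deg, hq⟩ : f ∈ degreeOfLEDiv (0 : Fin 2) m ((Δ1 * Δ2) ^ (2 * g - 2)) :=
    hsum ▸ Submodule.sum_mem _ fun n _ => V0_le_degreeOfLEDiv g m n (hF n).1.1
  obtain ⟨p, hp⟩ := hpole
  rw [hw, zpow_natCast] at hp hq
  obtain ⟨U, rfl⟩ := exists_eq_algebraMap_of_mul_Δ1_pow ι h1 h2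
    (zpow_ne_zero (g - 1) (by norm_num : (-1 : ℂ) ≠ 0)) (by simpa [sub_eq_zero] using hf_eigen) hp
  have hqU : q = U * (Δ1Poly * Δ2Poly) ^ w := algebraMap_R₂_injective <| by
    rw [← hq, map_mul, map_pow, map_mul, algebraMap_Δ1Poly, algebraMap_Δ2Poly]
  have hdeg (hU : U ≠ 0) : degreeOf 0 U + 3 * w ≤ m :=
    (le_degreeOf_mul_Δ1Poly_mul_Δ2Poly_pow hU w).trans (hqU ▸ hq_deg)
  refine ⟨⟨U, rfl, fun hU => by have := hdeg hU; omega⟩, fun hm => ?_⟩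
  rcases eq_or_ne U 0 with rfl | hU
  · exact map_zero _
  · have := hdeg hU
    omega

end
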